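/- Let G be a game such that G + Ḡ is a next-player win under misère play, and for every follower (subposition) H of G, H + H̄ is also a next-player win under misère play. Then G + Ḡ is equivalent to 0 modulo the universe of dicot games, i.e., for every dicot game X, the misère outcome of G + Ḡ + X equals the misère outcome of X. -/

import Mathlib

universe u

namespace SetTheory

/-- Pre-games, as in the older Mathlib `SetTheory.PGame` (removed from Mathlib since). -/
inductive PGame : Type (u + 1)
  | mk : ∀ α β : Type u, (α → PGame) → (β → PGame) → PGame

namespace PGame

def LeftMoves : PGame → Type u
  | mk l _ _ _ => l

def RightMoves : PGame → Type u
  | mk _ r _ _ => r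

def moveLeft : ∀ g : PGame, LeftMoves g → PGame
  | mk _l _ L _ => L

def moveRight : ∀ g : PGame, RightMoves g → PGame
  | mk _ _r _ R => R

inductive IsOption : PGame → PGame → Prop
  | moveLeft {x : PGame} (i : x.LeftMoves) : IsOption (x.moveLeft i) x
  | moveRight {x : PGame} (i : x.RightMoves) : IsOption (x.moveRight i) x

def Subsequent : PGame → PGame → Prop :=
  Relation.TransGen IsOption

instance : Zero PGame := ⟨⟨PEmpty, PEmpty, PEmpty.elim, PEmpty.elim⟩⟩

def neg : PGame → PGame
  | ⟨l, r, L, R⟩ => ⟨r, l, fun i => neg (R i), fun i => neg (L i)⟩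

instance : Neg PGame := ⟨neg⟩

/-- Auxiliary for `add`: adds the game `x` (with left/right options additions `fL`, `fR`)
to a game `y`, by recursion on `y`. -/
def addAux (xl xr : Type u) (fL : xl → PGame → PGame) (fR : xr → PGame → PGame)
    (x : PGame) : PGame → PGame
  | mk yl yr yL yR =>
    mk (xl ⊕ yl) (xr ⊕ yr)
      (Sum.elim (fun i => fL i (mk yl yr yL yR)) (fun j => addAux xl xr fL fR x (yL j)))
      (Sum.elim (fun i => fR i (mk yl yr yL yR)) (fun j => addAux xl xr fL fR x (yR j)))

/-- Disjunctive sum of pre-games (same as the old Mathlib `PGame` addition). -/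
def add : PGame.{u} → PGame.{u} → PGame.{u}
  | mk xl xr xL xR => addAux xl xr (fun i => add (xL i)) (fun i => add (xR i)) (mk xl xr xL xR)

instance : Add PGame.{u} := ⟨add⟩

def star : PGame.{u} := ⟨PUnit, PUnit, fun _ => 0, fun _ => 0⟩

end PGame

end SetTheory

open SetTheory

namespace Sprigs

/-- Partizan games (in the lowest universe). -/
abbrev PG : Type 1 := PGame.{0}

/-- Winning predicates moving first under misère play:
`(mw G).1` = Left wins moving first; `(mw G).2` = Right wins moving first. -/
def mw : PG → Prop × Prop
  | PGame.mk α β L R =>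
    ((IsEmpty α ∨ ∃ i, ¬ (mw (L i)).2), (IsEmpty β ∨ ∃ j, ¬ (mw (R j)).1))

/-- Winning predicates moving first under normal play. -/
def nw : PG → Prop × Prop
  | PGame.mk _ _ L R => ((∃ i, ¬ (nw (L i)).2), (∃ j, ¬ (nw (R j)).1))

/-- Outcome classes. -/
inductive Outcome : Type
  | L | R | N | P
deriving DecidableEq

/-- The outcome determined by "Left wins moving first" and "Right wins moving first". -/
noncomputable def outcomeOf (wl wr : Prop) : Outcome :=
  haveI := Classical.propDecidable wl
  haveI := Classical.propDecidable wr
  if wl then (if wr then .N else .L) else (if wr then .R else .P)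

/-- Misère-play outcome. -/
noncomputable def mo (G : PG) : Outcome := outcomeOf (mw G).1 (mw G).2

/-- Normal-play outcome. -/
noncomputable def no (G : PG) : Outcome := outcomeOf (nw G).1 (nw G).2

/-- Partial order on outcomes: R < P < L and R < N < L, with P, N incomparable. -/
def Outcome.le : Outcome → Outcome → Prop
  | .R, _ => True
  | _, .L => True
  | a, b => a = b

def Outcome.lt (a b : Outcome) : Prop := Outcome.le a b ∧ a ≠ b

/-- Dicot games: every subposition has moves for both players or neither. -/
def Dicot : PG → Prop
  | PGame.mk α β L R =>
    ((IsEmpty α ∧ IsEmpty β) ∨ (Nonempty α ∧ Nonempty β)) ∧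
      (∀ i, Dicot (L i)) ∧ (∀ j, Dicot (R j))

/-- Ordinal sum `G : H`. -/
def ordSum (G : PG) : PG → PGame
  | PGame.mk α β L R =>
    PGame.mk (G.LeftMoves ⊕ α) (G.RightMoves ⊕ β)
      (Sum.elim G.moveLeft (fun a => ordSum G (L a)))
      (Sum.elim G.moveRight (fun b => ordSum G (R b)))

/-- Canonical form of a natural number as a game. -/
def natGame : ℕ → PGame
  | 0 => PGame.mk PEmpty PEmpty PEmpty.elim PEmpty.elim
  | n + 1 => PGame.mk PUnit PEmpty (fun _ => natGame n) PEmpty.elim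

/-- Canonical form of an integer as a game. -/
def intGame (m : ℤ) : PG := if 0 ≤ m then natGame m.toNat else -natGame (-m).toNat

/-- Canonical form of the dyadic rational `m / 2 ^ n` as a game. -/
def dGame : ℕ → ℤ → PGame
  | 0, m => intGame m
  | n + 1, m =>
    if m % 2 = 0 then dGame n (m / 2)
    else PGame.mk PUnit PUnit (fun _ => dGame n ((m - 1) / 2)) (fun _ => dGame n ((m + 1) / 2))

/-- A rational number is dyadic if its denominator is a power of two. -/
def IsDyadic (q : ℚ) : Prop := ∃ n : ℕ, q.den = 2 ^ n

/-- The canonical-form game of a dyadic rational. -/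
def qGame (q : ℚ) : PG := dGame (Nat.log 2 q.den) q.num

/-- The Sprig `* : x` for a dyadic rational `x`. -/
def sprig (q : ℚ) : PG := ordSum PGame.star (qGame q)

/-- The Sprig `* : x̄` where `x̄` is the conjugate of the dyadic rational `x`. -/
def sprigNeg (q : ℚ) : PG := ordSum PGame.star (-qGame q)

/-- Disjunctive sum of a list of games. -/
def listSum (l : List PG) : PG := l.foldr (· + ·) 0

/-- The position `(X, Y) = Σ_{x ∈ X} *:x + Σ_{y ∈ Y} *:(-y)`. -/
def sprigsGame (X Y : List ℚ) : PG := listSum (X.map sprig ++ Y.map sprigNeg)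

/-- The minimum of a nonempty multiset of rationals (0 for the empty multiset). -/
noncomputable def mmin (s : Multiset ℚ) : ℚ :=
  if h : s = 0 then 0 else
    s.toFinset.min' (by rwa [Multiset.toFinset_nonempty])

/-- The edge `ε` computed from the reduced multisets `X' = X \ Y` and `Y' = Y \ X`. -/
noncomputable def edge (X Y : Multiset ℚ) : ℚ :=
  if X - Y = 0 ∨ Y - X = 0 then 0 else mmin (X - Y) - mmin (Y - X)

/-- The universe `S` of finite sums of Sprigs (and `*`). -/
inductive InS : PG → Prop
  | star : InS PGame.star
  | sprig {q : ℚ} (h : IsDyadic q) : InS (sprig q)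
  | sprigNeg {q : ℚ} (h : IsDyadic q) : InS (sprigNeg q)
  | add {a b : PG} : InS a → InS b → InS (a + b)

/-- A universe: a set of games closed under disjunctive sum and followers. -/
def IsUniverse (S : Set PG) : Prop :=
  (∀ a ∈ S, ∀ b ∈ S, a + b ∈ S) ∧ ∀ a ∈ S, ∀ b, PGame.Subsequent b a → b ∈ S

/-!
If a player has no move in `X`, then neither has the opponent, `X` being dicot, so `G + Ḡ + X` is
played exactly like the next-player win `G + Ḡ`: moving first, the player wins both `X` and
`G + Ḡ + X`. A player with a winning first move in `X` wins `G + Ḡ + X` by the same move, by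
induction on `X`. A player who loses `X` moving first also loses `G + Ḡ + X`: the opponent answers a
move in `X` by induction on `X`, and a move in `G` or `Ḡ` by the mirror move in the other
component. That reaches `H + H̄ + X` for an option `H` of `G`, which by induction on `G` has the
same outcome as `X`.
-/

end Sprigs

namespace SetTheory.PGame

theorem isOption_wf : WellFounded (IsOption : PGame.{u} → PGame.{u} → Prop) :=
  ⟨fun x => by
    induction x with
    | mk _ _ L R ihL ihR =>
      refine ⟨_, fun y hy => ?_⟩
      cases hy with
      | moveLeft i => exact ihL i
      | moveRight j => exact ihR j⟩

def leftOptions (x : PGame.{u}) : Set PGame.{u} := Set.range x.moveLeft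

def rightOptions (x : PGame.{u}) : Set PGame.{u} := Set.range x.moveRight

theorem isOption_of_mem_leftOptions {x y : PGame.{u}} (h : y ∈ x.leftOptions) : IsOption y x := by
  obtain ⟨i, rfl⟩ := h
  exact .moveLeft i

theorem isOption_of_mem_rightOptions {x y : PGame.{u}} (h : y ∈ x.rightOptions) :
    IsOption y x := by
  obtain ⟨j, rfl⟩ := h
  exact .moveRight j

theorem leftOptions_add (x y : PGame.{u}) :
    (x + y).leftOptions = (· + y) '' x.leftOptions ∪ (x + ·) '' y.leftOptions := by
  cases x; cases y
  simp only [leftOptions, ← Set.range_comp]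
  exact Set.Sum.elim_range _ _

theorem rightOptions_add (x y : PGame.{u}) :
    (x + y).rightOptions = (· + y) '' x.rightOptions ∪ (x + ·) '' y.rightOptions := by
  cases x; cases y
  simp only [rightOptions, ← Set.range_comp]
  exact Set.Sum.elim_range _ _

theorem leftOptions_neg (x : PGame.{u}) : (-x).leftOptions = Neg.neg '' x.rightOptions := by
  cases x
  exact Set.range_comp _ _

theorem rightOptions_neg (x : PGame.{u}) : (-x).rightOptions = Neg.neg '' x.leftOptions := by
  cases x
  exact Set.range_comp _ _

-- Mirror moves: once a player has moved from `G` to `H` in one of the components `G`, `-G`,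
-- the opponent reaches `H + -H + X` by the corresponding move in the other one.
theorem add_neg_add_mem_rightOptions_left {G H : PGame.{u}} (X : PGame.{u})
    (hH : H ∈ G.leftOptions) : H + -H + X ∈ (H + -G + X).rightOptions := by
  rw [rightOptions_add, rightOptions_add, rightOptions_neg]
  exact Or.inl ⟨_, Or.inr ⟨_, ⟨H, hH, rfl⟩, rfl⟩, rfl⟩

theorem add_neg_add_mem_rightOptions_right {G H : PGame.{u}} (X : PGame.{u})
    (hH : H ∈ G.rightOptions) : H + -H + X ∈ (G + -H + X).rightOptions := by
  rw [rightOptions_add, rightOptions_add]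
  exact Or.inl ⟨_, Or.inl ⟨H, hH, rfl⟩, rfl⟩

theorem add_neg_add_mem_leftOptions_left {G H : PGame.{u}} (X : PGame.{u})
    (hH : H ∈ G.rightOptions) : H + -H + X ∈ (H + -G + X).leftOptions := by
  rw [leftOptions_add, leftOptions_add, leftOptions_neg]
  exact Or.inl ⟨_, Or.inr ⟨_, ⟨H, hH, rfl⟩, rfl⟩, rfl⟩

theorem add_neg_add_mem_leftOptions_right {G H : PGame.{u}} (X : PGame.{u})
    (hH : H ∈ G.leftOptions) : H + -H + X ∈ (G + -H + X).leftOptions := by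
  rw [leftOptions_add, leftOptions_add]
  exact Or.inl ⟨_, Or.inl ⟨H, hH, rfl⟩, rfl⟩

end SetTheory.PGame

namespace Sprigs

open PGame

theorem mw_fst_iff (x : PG) :
    (mw x).1 ↔ x.leftOptions = ∅ ∨ ∃ y ∈ x.leftOptions, ¬ (mw y).2 := by
  cases x
  exact or_congr Set.range_eq_empty_iff.symm
    (Set.exists_range_iff (p := fun y => ¬ (mw y).2)).symm

theorem mw_snd_iff (x : PG) :
    (mw x).2 ↔ x.rightOptions = ∅ ∨ ∃ y ∈ x.rightOptions, ¬ (mw y).1 := by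
  cases x
  exact or_congr Set.range_eq_empty_iff.symm
    (Set.exists_range_iff (p := fun y => ¬ (mw y).1)).symm

theorem not_mw_fst_iff (x : PG) :
    ¬ (mw x).1 ↔ x.leftOptions.Nonempty ∧ ∀ y ∈ x.leftOptions, (mw y).2 := by
  simp [mw_fst_iff, Set.nonempty_iff_ne_empty]

theorem not_mw_snd_iff (x : PG) :
    ¬ (mw x).2 ↔ x.rightOptions.Nonempty ∧ ∀ y ∈ x.rightOptions, (mw y).1 := by
  simp [mw_snd_iff, Set.nonempty_iff_ne_empty]

theorem mo_eq_N_iff {x : PG} : mo x = .N ↔ (mw x).1 ∧ (mw x).2 := by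
  unfold mo outcomeOf
  split_ifs <;> simp_all

theorem Dicot.of_isOption {X Y : PG} (hX : Dicot X) (h : IsOption Y X) : Dicot Y := by
  cases X
  cases h with
  | moveLeft i => exact hX.2.1 i
  | moveRight j => exact hX.2.2 j

theorem Dicot.leftOptions_eq_empty_iff {X : PG} (hX : Dicot X) :
    X.leftOptions = ∅ ↔ X.rightOptions = ∅ := by
  cases X
  simp only [leftOptions, rightOptions, Set.range_eq_empty_iff]
  rcases hX.1 with ⟨hl, hr⟩ | ⟨hl, hr⟩
  · exact iff_of_true hl hr
  · exact iff_of_false (not_isEmpty_iff.mpr hl) (not_isEmpty_iff.mpr hr)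

theorem mw_add_of_options_eq_empty {X : PG} (hl : X.leftOptions = ∅) (hr : X.rightOptions = ∅)
    (K : PG) : mw (K + X) = mw K := by
  induction K using isOption_wf.induction with
  | _ K ih =>
  have hL : (K + X).leftOptions = (· + X) '' K.leftOptions := by
    rw [leftOptions_add, hl, Set.image_empty, Set.union_empty]
  have hR : (K + X).rightOptions = (· + X) '' K.rightOptions := by
    rw [rightOptions_add, hr, Set.image_empty, Set.union_empty]
  refine Prod.ext (propext ?_) (propext ?_)
  · rw [mw_fst_iff, mw_fst_iff, hL, Set.image_eq_empty, Set.exists_mem_image]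
    refine or_congr_right (exists_congr fun y => and_congr_right fun hy => ?_)
    rw [ih y (isOption_of_mem_leftOptions hy)]
  · rw [mw_snd_iff, mw_snd_iff, hR, Set.image_eq_empty, Set.exists_mem_image]
    refine or_congr_right (exists_congr fun y => and_congr_right fun hy => ?_)
    rw [ih y (isOption_of_mem_rightOptions hy)]

theorem mw_fst_add_neg_add_iff {G X : PG} (hX : X.leftOptions = ∅ → X.rightOptions = ∅)
    (hG : (mw (G + -G)).1)
    (ihX : ∀ Y ∈ X.leftOptions, (mw (G + -G + Y)).2 ↔ (mw Y).2)
    (ihG : ∀ H, IsOption H G → (mw (H + -H + X)).1 → (mw X).1) :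
    (mw (G + -G + X)).1 ↔ (mw X).1 := by
  refine ⟨fun h => by_contra fun hX1 => ?_, fun h => ?_⟩
  · obtain ⟨hne, hall⟩ := (not_mw_fst_iff X).mp hX1
    refine (not_mw_fst_iff _).mpr ⟨?_, ?_⟩ h
    · rw [leftOptions_add]
      exact Set.union_nonempty.mpr (Or.inr (hne.image _))
    simp only [leftOptions_add, leftOptions_neg, Set.mem_union, or_imp, forall_and,
      Set.forall_mem_image]
    refine ⟨⟨fun H hH => ?_, fun H hH => ?_⟩, fun Y hY => (ihX Y hY).mpr (hall Y hY)⟩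
    · exact (mw_snd_iff _).mpr (Or.inr ⟨_, add_neg_add_mem_rightOptions_left X hH,
        fun h' => hX1 (ihG H (isOption_of_mem_leftOptions hH) h')⟩)
    · exact (mw_snd_iff _).mpr (Or.inr ⟨_, add_neg_add_mem_rightOptions_right X hH,
        fun h' => hX1 (ihG H (isOption_of_mem_rightOptions hH) h')⟩)
  · rcases (mw_fst_iff X).mp h with hl | ⟨Y, hY, hY2⟩
    · rwa [mw_add_of_options_eq_empty hl (hX hl)]
    · rw [mw_fst_iff, leftOptions_add]
      exact Or.inr ⟨_, Or.inr ⟨Y, hY, rfl⟩, fun h' => hY2 ((ihX Y hY).mp h')⟩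

theorem mw_snd_add_neg_add_iff {G X : PG} (hX : X.rightOptions = ∅ → X.leftOptions = ∅)
    (hG : (mw (G + -G)).2)
    (ihX : ∀ Y ∈ X.rightOptions, (mw (G + -G + Y)).1 ↔ (mw Y).1)
    (ihG : ∀ H, IsOption H G → (mw (H + -H + X)).2 → (mw X).2) :
    (mw (G + -G + X)).2 ↔ (mw X).2 := by
  refine ⟨fun h => by_contra fun hX2 => ?_, fun h => ?_⟩
  · obtain ⟨hne, hall⟩ := (not_mw_snd_iff X).mp hX2
    refine (not_mw_snd_iff _).mpr ⟨?_, ?_⟩ h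
    · rw [rightOptions_add]
      exact Set.union_nonempty.mpr (Or.inr (hne.image _))
    simp only [rightOptions_add, rightOptions_neg, Set.mem_union, or_imp, forall_and,
      Set.forall_mem_image]
    refine ⟨⟨fun H hH => ?_, fun H hH => ?_⟩, fun Y hY => (ihX Y hY).mpr (hall Y hY)⟩
    · exact (mw_fst_iff _).mpr (Or.inr ⟨_, add_neg_add_mem_leftOptions_left X hH,
        fun h' => hX2 (ihG H (isOption_of_mem_rightOptions hH) h')⟩)
    · exact (mw_fst_iff _).mpr (Or.inr ⟨_, add_neg_add_mem_leftOptions_right X hH,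
        fun h' => hX2 (ihG H (isOption_of_mem_leftOptions hH) h')⟩)
  · rcases (mw_snd_iff X).mp h with hr | ⟨Y, hY, hY1⟩
    · rwa [mw_add_of_options_eq_empty (hX hr) hr]
    · rw [mw_snd_iff, rightOptions_add]
      exact Or.inr ⟨_, Or.inr ⟨Y, hY, rfl⟩, fun h' => hY1 ((ihX Y hY).mp h')⟩

theorem mw_add_neg_add {X : PG} (hX : Dicot X) {G : PG}
    (hG : ∀ H, Relation.ReflTransGen IsOption H G → mo (H + -H) = .N) :
    mw (G + -G + X) = mw X := by
  induction X using isOption_wf.induction generalizing G with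
  | _ X ihX =>
  induction G using isOption_wf.induction with
  | _ G ihG =>
  have ihX' Y (hY : IsOption Y X) : mw (G + -G + Y) = mw Y := ihX Y hY (hX.of_isOption hY) hG
  have ihG' H (hH : IsOption H G) : mw (H + -H + X) = mw X :=
    ihG H hH fun K hK => hG K (hK.tail hH)
  obtain ⟨hGl, hGr⟩ := mo_eq_N_iff.mp (hG G .refl)
  refine Prod.ext (propext ?_) (propext ?_)
  · exact mw_fst_add_neg_add_iff hX.leftOptions_eq_empty_iff.mp hGl
      (fun Y hY => Iff.of_eq (congrArg Prod.snd (ihX' Y (isOption_of_mem_leftOptions hY))))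
      (fun H hH => (congrArg Prod.fst (ihG' H hH)).mp)
  · exact mw_snd_add_neg_add_iff hX.leftOptions_eq_empty_iff.mpr hGr
      (fun Y hY => Iff.of_eq (congrArg Prod.fst (ihX' Y (isOption_of_mem_rightOptions hY))))
      (fun H hH => (congrArg Prod.snd (ihG' H hH)).mp)

/-- If `G + Ḡ ∈ N⁻` and `H + H̄ ∈ N⁻` for every follower `H` of `G`, then
`G + Ḡ ≡ 0 (mod D)`. -/
theorem stmt2 (G : PG) (hG : mo (G + -G) = Outcome.N)
    (hfollowers : ∀ H : PG, PGame.Subsequent H G → mo (H + -H) = Outcome.N) :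
    ∀ X : PG, Dicot X → mo (G + -G + X) = mo X := by
  intro X hX
  have hG' (H : PG) (hH : Relation.ReflTransGen IsOption H G) : mo (H + -H) = .N := by
    rcases Relation.reflTransGen_iff_eq_or_transGen.mp hH with rfl | h
    exacts [hG, hfollowers H h]
  rw [mo, mo, mw_add_neg_add hX hG']

end Sprigs
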